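/- Let k ≥ 1 and let G_k be the connected graph on 6k + 1 vertices obtained by taking k cycles of length 7 and identifying one vertex from each of them to a single common vertex x (the cycles being otherwise pairwise disjoint). Then v(J(G_k)) = 3k. -/

import Mathlib

open MvPolynomial CategoryTheory

noncomputable section

/-- A set of vertices is a vertex cover if it meets every edge. -/
def IsVertexCover {V : Type} (G : SimpleGraph V) (C : Set V) : Prop :=
  ∀ ⦃u v : V⦄, G.Adj u v → u ∈ C ∨ v ∈ C

/-- A vertex cover minimal with respect to inclusion. -/
def IsMinimalVertexCover {V : Type} (G : SimpleGraph V) (C : Set V) : Prop :=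
  IsVertexCover G C ∧ ∀ C' ⊆ C, IsVertexCover G C' → C' = C

/-- `α₀(G)`: the minimum cardinality of a vertex cover of `G`. -/
def coverNumber {V : Type} (G : SimpleGraph V) : ℕ :=
  sInf {k | ∃ C : Set V, IsVertexCover G C ∧ C.ncard = k}

/-- `bight(I(G))`: the maximum cardinality of a minimal vertex cover of `G`. -/
def bigHeight {V : Type} (G : SimpleGraph V) : ℕ :=
  sSup {k | ∃ C : Set V, IsMinimalVertexCover G C ∧ C.ncard = k}

/-- The edge ideal `I(G) ⊆ K[x_v : v ∈ V]`, generated by the monomials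
`x_u * x_v` over the edges `{u,v}` of `G`. -/
def edgeIdeal (K : Type) [Field K] {V : Type} (G : SimpleGraph V) :
    Ideal (MvPolynomial V K) :=
  Ideal.span {m | ∃ u v : V, G.Adj u v ∧ m = X u * X v}

/-- The cover ideal `J(G) = ⋂_{{u,v} ∈ E(G)} ⟨x_u, x_v⟩`. -/
def coverIdeal (K : Type) [Field K] {V : Type} (G : SimpleGraph V) :
    Ideal (MvPolynomial V K) :=
  ⨅ (u : V) (v : V) (_ : G.Adj u v), Ideal.span {X u, X v}

/-- The v-number of a graded ideal `I`: the least `d ≥ 0` such that there is a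
homogeneous polynomial `f` of degree `d` with `I : f` a prime ideal. -/
def vNumber {K : Type} [Field K] {V : Type} (I : Ideal (MvPolynomial V K)) : ℕ :=
  sInf {d | ∃ f : MvPolynomial V K, f.IsHomogeneous d ∧
    (I.colon (Ideal.span {f})).IsPrime}

/-- The homogeneous maximal ideal `⟨x_1, …, x_n⟩` of the polynomial ring. -/
def maxIdeal (K : Type) [Field K] (V : Type) : Ideal (MvPolynomial V K) :=
  Ideal.span (Set.range (X : V → MvPolynomial V K))

/-- The depth of the module `M` with respect to the ideal `J`: the supremum of
the lengths of regular sequences on `M` consisting of elements of `J`. -/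
def mdepth {R : Type} [CommRing R] (J : Ideal R) (M : Type) [AddCommGroup M]
    [Module R M] : ℕ :=
  sSup {k | ∃ rs : List R, rs.length = k ∧ (∀ r ∈ rs, r ∈ J) ∧
    RingTheory.Sequence.IsRegular M rs}

/-- The projective dimension of an `R`-module `M`, characterized by the
vanishing of `Ext^i(M, N)` for all `i > d` and all modules `N`. -/
def projDim (R : Type) [CommRing R] (M : ModuleCat.{0} R) : ℕ :=
  sInf {d : ℕ | ∀ (N : ModuleCat.{0} R) (i : ℕ), d < i →
    Subsingleton (((Ext R (ModuleCat.{0} R) i).obj (Opposite.op M)).obj N)}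

/-- Auxiliary relation for the graph `G_k`: the common vertex `x` is `none`;
the `i`-th seven-cycle consists of `x` together with the six vertices
`(i, 0), …, (i, 5)`, with `x ~ (i,0) ~ (i,1) ~ ⋯ ~ (i,5) ~ x`. -/
def gluedAdjAux (k : ℕ) : Option (Fin k × Fin 6) → Option (Fin k × Fin 6) → Prop
  | none, some p => p.2 = 0 ∨ p.2 = 5
  | some p, some q => p.1 = q.1 ∧ (p.2 : ℕ) + 1 = (q.2 : ℕ)
  | _, _ => False

/-- The connected graph `G_k` on `6k + 1` vertices obtained from `k` disjoint
cycles of length `7` by identifying one vertex of each to a common vertex. -/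
def gluedCycles (k : ℕ) : SimpleGraph (Option (Fin k × Fin 6)) :=
  SimpleGraph.fromRel (gluedAdjAux k)

/-!
Since each `⟨x_u, x_v⟩` is prime, `J(G) : f` is the intersection of the `⟨x_u, x_v⟩` over the
edges `uv` with `f ∉ ⟨x_u, x_v⟩`. For finite `G` it is therefore prime exactly when there is a
single such edge, and then it equals `⟨x_u, x_v⟩`. A monomial of `f` avoiding `x_u, x_v` has as
support a vertex cover of `G - uv` missing `u` and `v`. In `G_k` such a cover has at least `3k`
vertices, and one with exactly `3k` vertices exists.
-/

namespace MvPolynomial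

variable {σ R : Type*}

theorem sub_aeval_mem_span_X_image [CommRing R] (s : Set σ) [DecidablePred (· ∈ s)]
    (p : MvPolynomial σ R) :
    p - aeval (fun i => if i ∈ s then (0 : MvPolynomial σ R) else X i) p ∈
      Ideal.span (X '' s) := by
  induction p using MvPolynomial.induction_on with
  | C a => simp
  | add p q hp hq => simpa [add_sub_add_comm] using add_mem hp hq
  | mul_X p i hp =>
    by_cases hi : i ∈ s
    · simpa [hi] using Ideal.mul_mem_left _ p (Ideal.subset_span (Set.mem_image_of_mem X hi))
    · simpa [hi, sub_mul] using Ideal.mul_mem_right (X i) _ hp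

theorem isPrime_span_X_image [CommRing R] [IsDomain R] (s : Set σ) :
    (Ideal.span (X '' s : Set (MvPolynomial σ R))).IsPrime := by
  classical
  suffices h : Ideal.span (X '' s) =
      RingHom.ker (aeval fun i => if i ∈ s then (0 : MvPolynomial σ R) else X i) from
    h ▸ RingHom.ker_isPrime _
  refine le_antisymm ?_ fun p hp => ?_
  · rw [Ideal.span_le]
    rintro _ ⟨i, hi, rfl⟩
    simp [hi]
  · simpa only [RingHom.mem_ker.mp hp, sub_zero] using sub_aeval_mem_span_X_image s p

theorem isPrime_span_X_pair [CommRing R] [IsDomain R] (a b : σ) :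
    (Ideal.span {X a, X b} : Ideal (MvPolynomial σ R)).IsPrime := by
  simpa [Set.image_pair] using isPrime_span_X_image (R := R) {a, b}

theorem mem_span_X_pair_iff [CommSemiring R] {a b : σ} {p : MvPolynomial σ R} :
    p ∈ Ideal.span {X a, X b} ↔ ∀ m ∈ p.support, m a ≠ 0 ∨ m b ≠ 0 := by
  rw [← Set.image_pair, mem_ideal_span_X_image]
  simp

theorem X_mem_span_X_pair_iff [CommSemiring R] [Nontrivial R] {a b w : σ} :
    (X w : MvPolynomial σ R) ∈ Ideal.span {X a, X b} ↔ w = a ∨ w = b := by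
  classical
  simp [mem_span_X_pair_iff, support_X, Finsupp.single_apply, eq_comm]

theorem monomial_one_mem_span_X_pair_iff [CommSemiring R] [Nontrivial R] {a b : σ}
    {m : σ →₀ ℕ} : monomial m (1 : R) ∈ Ideal.span {X a, X b} ↔ m a ≠ 0 ∨ m b ≠ 0 := by
  classical
  simp [mem_span_X_pair_iff, support_monomial]

theorem span_X_pair_eq_of_sym2_eq [CommSemiring R] {a b u v : σ} (h : s(a, b) = s(u, v)) :
    (Ideal.span {X a, X b} : Ideal (MvPolynomial σ R)) = Ideal.span {X u, X v} := by
  rcases Sym2.eq_iff.mp h with ⟨rfl, rfl⟩ | ⟨rfl, rfl⟩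
  · rfl
  · rw [Set.pair_comm]

end MvPolynomial

section CoverIdeal

variable {K : Type} [Field K] {V : Type} {G : SimpleGraph V}

theorem coverIdeal_colon_eq (f : MvPolynomial V K) :
    (coverIdeal K G).colon (Ideal.span {f}) =
      ⨅ (u) (v) (_ : G.Adj u v) (_ : f ∉ Ideal.span {X u, X v}), Ideal.span {X u, X v} := by
  ext r
  simp only [Ideal.mem_colon_span_singleton, coverIdeal, Ideal.mem_iInf]
  refine forall₃_congr fun u v _ => ⟨fun h hf => ?_, fun h => ?_⟩
  · exact ((isPrime_span_X_pair u v).mem_or_mem h).resolve_right hf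
  · by_cases hf : f ∈ Ideal.span {X u, X v}
    · exact Ideal.mul_mem_left _ r hf
    · exact Ideal.mul_mem_right f _ (h hf)

theorem coverIdeal_colon_eq_span_X_pair {f : MvPolynomial V K} {u v : V} (huv : G.Adj u v)
    (hf : f ∉ Ideal.span {X u, X v})
    (huniq : ∀ a b, G.Adj a b → f ∉ Ideal.span {X a, X b} → s(a, b) = s(u, v)) :
    (coverIdeal K G).colon (Ideal.span {f}) = Ideal.span {X u, X v} := by
  rw [coverIdeal_colon_eq]
  refine le_antisymm (iInf_le_of_le u <| iInf_le_of_le v <| iInf_le_of_le huv <| iInf_le _ hf)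
    (le_iInf₂ fun a b => le_iInf₂ fun hab hfab => ?_)
  rw [span_X_pair_eq_of_sym2_eq (huniq a b hab hfab)]

/-- A prime finite intersection of primes equals one of them, which then lies in all the others. -/
theorem exists_unique_edge_of_isPrime_coverIdeal_colon [Finite V] {f : MvPolynomial V K}
    (hQ : ((coverIdeal K G).colon (Ideal.span {f})).IsPrime) :
    ∃ u v, G.Adj u v ∧ f ∉ Ideal.span {X u, X v} ∧
      ∀ a b, G.Adj a b → f ∉ Ideal.span {X a, X b} → s(a, b) = s(u, v) := by
  classical
  have := Fintype.ofFinite V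
  let P : V × V → Ideal (MvPolynomial V K) := fun p => Ideal.span {X p.1, X p.2}
  let T := Finset.univ.filter fun p : V × V => G.Adj p.1 p.2 ∧ f ∉ P p
  have hT : (coverIdeal K G).colon (Ideal.span {f}) = T.inf P := by
    rw [coverIdeal_colon_eq, Finset.inf_eq_iInf]
    simp [T, P, iInf_prod, iInf_and]
  obtain ⟨⟨u, v⟩, huv, hP⟩ := Ideal.eq_inf_of_isPrime_inf (hT ▸ hQ)
  simp only [T, Finset.mem_filter, Finset.mem_univ, true_and] at huv
  refine ⟨u, v, huv.1, huv.2, fun a b hab hf => ?_⟩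
  have hle : P (u, v) ≤ P (a, b) := by
    have := Finset.inf_le (f := P) (show (a, b) ∈ T by simpa [T, P, hab] using hf)
    rwa [← hP] at this
  have hu : u ∈ s(a, b) :=
    Sym2.mem_iff.mpr (X_mem_span_X_pair_iff.mp (hle (Ideal.subset_span (by simp))))
  have hv : v ∈ s(a, b) :=
    Sym2.mem_iff.mpr (X_mem_span_X_pair_iff.mp (hle (Ideal.subset_span (by simp))))
  exact Sym2.eq_of_ne_mem huv.1.ne hu hv (Sym2.mem_mk_left u v) (Sym2.mem_mk_right u v)

theorem exists_exponent_of_isPrime_coverIdeal_colon [Finite V] {f : MvPolynomial V K} {d : ℕ}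
    (hf : f.IsHomogeneous d) (hQ : ((coverIdeal K G).colon (Ideal.span {f})).IsPrime) :
    ∃ u v, G.Adj u v ∧ ∃ m : V →₀ ℕ, m.degree = d ∧ m u = 0 ∧ m v = 0 ∧
      IsVertexCover (G.deleteEdges {s(u, v)}) {w | m w ≠ 0} := by
  obtain ⟨u, v, huv, hfuv, huniq⟩ := exists_unique_edge_of_isPrime_coverIdeal_colon hQ
  obtain ⟨m, hm, hmu, hmv⟩ : ∃ m ∈ f.support, m u = 0 ∧ m v = 0 := by
    simpa [mem_span_X_pair_iff] using hfuv
  refine ⟨u, v, huv, m, (hf.degree_eq_sum_deg_support hm).symm, hmu, hmv, fun a b hab => ?_⟩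
  rw [SimpleGraph.deleteEdges_adj, Set.mem_singleton_iff] at hab
  have hfab : f ∈ Ideal.span {X a, X b} := by_contra fun h => hab.2 (huniq a b hab.1 h)
  exact mem_span_X_pair_iff.mp hfab m hm

theorem coverIdeal_colon_monomial_eq {m : V →₀ ℕ} {u v : V} (huv : G.Adj u v) (hu : m u = 0)
    (hv : m v = 0) (hcov : IsVertexCover (G.deleteEdges {s(u, v)}) {w | m w ≠ 0}) :
    (coverIdeal K G).colon (Ideal.span {monomial m (1 : K)}) = Ideal.span {X u, X v} := by
  refine coverIdeal_colon_eq_span_X_pair huv (by simp [monomial_one_mem_span_X_pair_iff, hu, hv])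
    fun a b hab h => by_contra fun hne => h ?_
  exact monomial_one_mem_span_X_pair_iff.mpr (hcov (by simp [hab, hne]))

end CoverIdeal

namespace gluedCycles

theorem sum_succ_bounds_of_covers_cycle (a : Fin 7 → ℕ) (h : ∀ t, a t ≠ 0 ∨ a (t + 1) ≠ 0) :
    3 ≤ ∑ t : Fin 6, a t.succ ∧ (a 0 = 0 → 4 ≤ ∑ t : Fin 6, a t.succ) := by
  have := h 0; have := h 1; have := h 2; have := h 3; have := h 4; have := h 5; have := h 6
  simp only [Fin.sum_univ_six]
  simp only [ne_eq, Fin.isValue, zero_add, Fin.reduceAdd, Fin.succ_zero_eq_one,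
    Fin.succ_one_eq_two, Fin.reduceSucc] at *
  omega

theorem sum_succ_bounds_of_covers_path (a : Fin 7 → ℕ) (s : Fin 7) (hs : a s = 0)
    (hs' : a (s + 1) = 0) (h : ∀ t ≠ s, a t ≠ 0 ∨ a (t + 1) ≠ 0) :
    2 ≤ ∑ t : Fin 6, a t.succ ∧ (a 0 = 0 → 3 ≤ ∑ t : Fin 6, a t.succ) := by
  have h' : ∀ t, t = s ∨ a t ≠ 0 ∨ a (t + 1) ≠ 0 := fun t => or_iff_not_imp_left.2 (h t)
  have := h' 0; have := h' 1; have := h' 2; have := h' 3; have := h' 4; have := h' 5; have := h' 6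
  simp only [Fin.sum_univ_six]
  fin_cases s <;>
    simp only [Fin.zero_eta, Fin.mk_one, Fin.reduceFinMk, Fin.isValue, zero_add, ne_eq, true_or,
      false_or, one_ne_zero, zero_ne_one, Fin.reduceAdd, Fin.reduceEq, Fin.succ_zero_eq_one,
      Fin.succ_one_eq_two, Fin.reduceSucc] at * <;>
    omega

theorem three_mul_le_add_sum_of_bounds {k : ℕ} (x : ℕ) (c : Fin k → ℕ) (i : Fin k)
    (hi : 2 ≤ c i ∧ (x = 0 → 3 ≤ c i)) (hj : ∀ j ≠ i, 3 ≤ c j ∧ (x = 0 → 4 ≤ c j)) :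
    3 * k ≤ x + ∑ j, c j := by
  have hsum : ∀ n, (∀ j ≠ i, n ≤ c j) → (k - 1) * n + c i ≤ ∑ j, c j := by
    intro n hn
    have := Finset.card_nsmul_le_sum (Finset.univ.erase i) (fun j => c j) n
      fun j hj => hn j (Finset.ne_of_mem_erase hj)
    rw [← Finset.add_sum_erase _ _ (Finset.mem_univ i)]
    simp only [Finset.mem_univ, Finset.card_erase_of_mem, Finset.card_univ, Fintype.card_fin,
      smul_eq_mul] at this
    omega
  have hk := i.pos
  by_cases hx : x = 0
  · have := hsum 4 fun j hji => (hj j hji).2 hx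
    have := hi.2 hx
    omega
  · have := hsum 3 fun j hji => (hj j hji).1
    have := hi.1
    omega

variable {k : ℕ}

/-- `petal j` runs around the `j`-th seven-cycle of `G_k`, position `0` being the common vertex. -/
def petal (j : Fin k) (t : Fin 7) : Option (Fin k × Fin 6) :=
  if h : (t : ℕ) = 0 then none else some (j, ⟨t - 1, by omega⟩)

@[simp]
theorem petal_succ (j : Fin k) (t : Fin 6) : petal j t.succ = some (j, t) := by
  simp [petal]

theorem adj_petal (j : Fin k) (t : Fin 7) : (gluedCycles k).Adj (petal j t) (petal j (t + 1)) := by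
  fin_cases t <;> simp [gluedCycles, gluedAdjAux, petal]

theorem exists_petal_of_gluedAdjAux {u v : Option (Fin k × Fin 6)} (h : gluedAdjAux k u v) :
    ∃ j t, s(u, v) = s(petal j t, petal j (t + 1)) := by
  match u, v, h with
  | none, some (j, t), h =>
    rcases h with rfl | rfl
    · exact ⟨j, 0, by simp [petal]⟩
    · exact ⟨j, 6, by simp [petal, Sym2.eq_swap]⟩
  | some (j, a), some (j', b), h =>
    obtain ⟨rfl, hab⟩ : j = j' ∧ (a : ℕ) + 1 = b := h
    have hb : a.succ + 1 = b.succ := by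
      ext
      simp only [Fin.val_add, Fin.val_succ, Fin.coe_ofNat_eq_mod, Nat.one_mod]
      omega
    exact ⟨j, a.succ, by rw [hb, petal_succ, petal_succ]⟩

theorem exists_petal_of_adj {u v : Option (Fin k × Fin 6)} (h : (gluedCycles k).Adj u v) :
    ∃ j t, s(u, v) = s(petal j t, petal j (t + 1)) := by
  rcases ((SimpleGraph.fromRel_adj _ _ _).mp h).2 with h | h
  · exact exists_petal_of_gluedAdjAux h
  · simpa [Sym2.eq_swap] using exists_petal_of_gluedAdjAux h

theorem eq_of_petal_edge_eq {i j : Fin k} {s t : Fin 7}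
    (h : s(petal j t, petal j (t + 1)) = s(petal i s, petal i (s + 1))) : j = i ∧ t = s := by
  fin_cases t <;> fin_cases s <;> simp [petal] at h ⊢ <;> tauto

theorem sum_eq_add_sum_petal (e : Option (Fin k × Fin 6) → ℕ) :
    ∑ w, e w = e none + ∑ j, ∑ t : Fin 6, e (petal j t.succ) := by
  simp [Fintype.sum_option, Fintype.sum_prod_type]

/-- Each petal needs weight `3` off the hub, or `4` if the hub has weight `0`; the petal
containing `uv` needs one less. -/
theorem three_mul_le_sum_of_isVertexCover_deleteEdges (e : Option (Fin k × Fin 6) → ℕ)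
    {u v : Option (Fin k × Fin 6)} (huv : (gluedCycles k).Adj u v) (hu : e u = 0) (hv : e v = 0)
    (hcov : IsVertexCover ((gluedCycles k).deleteEdges {s(u, v)}) {w | e w ≠ 0}) :
    3 * k ≤ ∑ w, e w := by
  obtain ⟨i, s, hs⟩ := exists_petal_of_adj huv
  have hpetal : ∀ j t, s(petal j t, petal j (t + 1)) ≠ s(u, v) →
      e (petal j t) ≠ 0 ∨ e (petal j (t + 1)) ≠ 0 := fun j t hne =>
    hcov (by simp [adj_petal, hne])
  have hzero : e (petal i s) = 0 ∧ e (petal i (s + 1)) = 0 := by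
    rcases Sym2.eq_iff.mp hs with ⟨rfl, rfl⟩ | ⟨rfl, rfl⟩
    exacts [⟨hu, hv⟩, ⟨hv, hu⟩]
  rw [sum_eq_add_sum_petal]
  refine three_mul_le_add_sum_of_bounds _ _ i ?_ fun j hj => ?_
  · refine sum_succ_bounds_of_covers_path (e ∘ petal i) s hzero.1 hzero.2 fun t ht => ?_
    exact hpetal i t fun h => ht (eq_of_petal_edge_eq (h.trans hs)).2
  · refine sum_succ_bounds_of_covers_cycle (e ∘ petal j) fun t => ?_
    exact hpetal j t fun h => hj (eq_of_petal_edge_eq (h.trans hs)).1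

/-- The common vertex, the vertices `2, 5` of petal `i` and `2, 4, 6` of the other petals:
these meet every edge except `{petal i 3, petal i 4}`. -/
def coverWitness (i : Fin k) : Option (Fin k × Fin 6) →₀ ℕ :=
  Finsupp.equivFunOnFinite.symm fun
    | none => 1
    | some (j, t) => if j = i then (if t = 1 ∨ t = 4 then 1 else 0)
        else (if t = 1 ∨ t = 3 ∨ t = 5 then 1 else 0)

theorem degree_coverWitness (i : Fin k) : (coverWitness i).degree = 3 * k := by
  have hk := i.pos
  have h1 : ({x : Fin 6 | x = 1 ∨ x = 4} : Finset (Fin 6)).card = 2 := by decide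
  have h2 : ({x : Fin 6 | x = 1 ∨ x = 3 ∨ x = 5} : Finset (Fin 6)).card = 3 := by decide
  rw [Finsupp.degree_eq_sum, Fintype.sum_option, Fintype.sum_prod_type]
  simp only [coverWitness, Finsupp.equivFunOnFinite_symm_apply_apply, Finset.sum_ite_irrel,
    Finset.sum_boole, h1, h2, Nat.cast_ofNat, Finset.sum_ite, Finset.filter_eq', Finset.mem_univ,
    if_true, Finset.sum_const, Finset.card_singleton, smul_eq_mul, one_mul, Finset.filter_ne',
    Finset.card_erase_of_mem, Finset.card_univ, Fintype.card_fin]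
  omega

theorem isVertexCover_coverWitness (i : Fin k) :
    IsVertexCover ((gluedCycles k).deleteEdges {s(petal i 3, petal i 4)})
      {w | coverWitness i w ≠ 0} := by
  intro a b hab
  rw [SimpleGraph.deleteEdges_adj, Set.mem_singleton_iff] at hab
  obtain ⟨j, t, hjt⟩ := exists_petal_of_adj hab.1
  have hpetal : s(petal j t, petal j (t + 1)) ≠ s(petal i 3, petal i 4) →
      coverWitness i (petal j t) ≠ 0 ∨ coverWitness i (petal j (t + 1)) ≠ 0 := by
    by_cases hji : j = i
    · subst hji
      fin_cases t <;> simp [coverWitness, petal]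
    · fin_cases t <;> simp [coverWitness, petal, hji]
  rcases Sym2.eq_iff.mp hjt with ⟨rfl, rfl⟩ | ⟨rfl, rfl⟩
  · exact hpetal (hjt ▸ hab.2)
  · exact (hpetal (hjt ▸ hab.2)).symm

end gluedCycles

open gluedCycles in
/-- For the graph `G_k` obtained by gluing `k` seven-cycles at a common
vertex, `v(J(G_k)) = 3k`. -/
theorem vNumber_coverIdeal_gluedCycles
    {K : Type} [Field K] (k : ℕ) (hk : 1 ≤ k) :
    vNumber (coverIdeal K (gluedCycles k)) = 3 * k := by
  let i : Fin k := ⟨0, hk⟩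
  have hwitness : 3 * k ∈ {d | ∃ f : MvPolynomial (Option (Fin k × Fin 6)) K,
      f.IsHomogeneous d ∧ ((coverIdeal K (gluedCycles k)).colon (Ideal.span {f})).IsPrime} := by
    refine ⟨monomial (coverWitness i) 1, isHomogeneous_monomial _ (degree_coverWitness i), ?_⟩
    rw [coverIdeal_colon_monomial_eq (adj_petal i 3) (by simp [coverWitness, petal])
      (by simp [coverWitness, petal]) (isVertexCover_coverWitness i)]
    exact isPrime_span_X_pair _ _
  refine le_antisymm (Nat.sInf_le hwitness) (le_csInf ⟨_, hwitness⟩ ?_)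
  rintro d ⟨f, hf, hQ⟩
  obtain ⟨u, v, huv, m, rfl, hu, hv, hcov⟩ := exists_exponent_of_isPrime_coverIdeal_colon hf hQ
  rw [Finsupp.degree_eq_sum]
  exact three_mul_le_sum_of_isVertexCover_deleteEdges m huv hu hv hcov

end
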